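/- If Δ_φ(ψ) is invertible (which holds when φ ≡_u ψ), then the intertwiner S : H_φ → H_ψ with S(π_φ(g)V_φξ) = π_ψ(g)V_ψξ factors as S = U Δ_φ(ψ)^{1/2} for a unitary U : H_φ → H_ψ, and Δ_φ(ψ) = S*S. -/

import Mathlib

open scoped ComplexOrder

noncomputable section

def IsInvolution (G : Type*) [Group G] (α : G → G) : Prop :=
  (∀ g, α (α g) = g) ∧ α 1 = 1 ∧ ∀ g : G, α g⁻¹ = (α g)⁻¹

def IsAlphaCP {G : Type*} [Group G] (α : G → G)
    {H : Type*} [NormedAddCommGroup H] [InnerProductSpace ℂ H] [CompleteSpace H]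
    (φ : G → H →L[ℂ] H) : Prop :=
  (∀ g₁ g₂ : G, φ (α g₁ * α g₂) = φ (α (g₁ * g₂)) ∧ φ (α (g₁ * g₂)) = φ (g₁ * g₂)) ∧
  (∀ (n : ℕ) (g : Fin n → G) (ξ : Fin n → H),
    0 ≤ ∑ i, ∑ j, (inner ℂ (φ ((α (g i))⁻¹ * g j) (ξ j)) (ξ i) : ℂ)) ∧
  (∃ K > (0 : ℝ), ∀ (n : ℕ) (g : Fin n → G) (ξ : Fin n → H),
    ∑ i, ∑ j, (inner ℂ (((ContinuousLinearMap.adjoint (φ (g i))) ∘L φ (g j)) (ξ j)) (ξ i) : ℂ) ≤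
      (K : ℂ) * ∑ i, ∑ j, (inner ℂ (φ ((α (g i))⁻¹ * g j) (ξ j)) (ξ i) : ℂ)) ∧
  (∀ g : G, ∃ M > (0 : ℝ), ∀ (n : ℕ) (gs : Fin n → G) (ξ : Fin n → H),
    ∑ i, ∑ j, (inner ℂ (φ ((α (g * gs i))⁻¹ * (g * gs j)) (ξ j)) (ξ i) : ℂ) ≤
      (M : ℂ) * ∑ i, ∑ j, (inner ℂ (φ ((α (gs i))⁻¹ * gs j) (ξ j)) (ξ i) : ℂ))

structure KreinDilation (G : Type*) [Group G] (α : G → G)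
    (H : Type*) [NormedAddCommGroup H] [InnerProductSpace ℂ H] [CompleteSpace H]
    (φ : G → H →L[ℂ] H) where
  K : Type
  [nK : NormedAddCommGroup K]
  [iK : InnerProductSpace ℂ K]
  [cK : CompleteSpace K]
  J : K →L[ℂ] K
  rep : G → K →L[ℂ] K
  V : H →L[ℂ] K
  J_sa : ContinuousLinearMap.adjoint J = J
  J_inv : J ∘L J = 1
  rep_one : rep 1 = 1
  rep_mul : ∀ g g', rep (g * g') = rep g ∘L rep g'
  rep_inv : ∀ g, rep g⁻¹ = J ∘L (ContinuousLinearMap.adjoint (rep g)) ∘L J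
  eq : ∀ g, φ g = (ContinuousLinearMap.adjoint V) ∘L rep g ∘L V
  minimal : (Submodule.span ℂ {x : K | ∃ g ξ, x = rep g (V ξ)}).topologicalClosure = ⊤
  commJ : ∀ g, J ∘L rep g ∘L V = rep (α g) ∘L V

attribute [instance] KreinDilation.nK KreinDilation.iK KreinDilation.cK

/-! The relation `S (π_φ(g) V_φ ξ) = π_ψ(g) V_ψ ξ` extends by density to `S π_φ(g) = π_ψ(g) S`,
`S J_φ = J_ψ S` and `S V_φ = V_ψ`; since `π(g)* = J π(g⁻¹) J`, the adjoint `S*` intertwines too,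
which gives the commutation relations of `S*S` and `ψ(g) = V_φ* S*S π_φ(g) V_φ`. Positivity of
`l ψ - φ` reads `‖x‖² ≤ l ‖S x‖²` on the span of the vectors `π_φ(g) V_φ ξ`, hence everywhere, so
`S` is bounded below with dense range, i.e. invertible. Any self-adjoint square root `R` of `S*S`
satisfies `‖R x‖ = ‖S x‖` and is onto because `S*` is, so `S R⁻¹` is the required unitary. -/

open ContinuousLinearMap

lemma IsAlphaCP.apply_alpha {G : Type*} [Group G] {α : G → G}
    {H : Type*} [NormedAddCommGroup H] [InnerProductSpace ℂ H] [CompleteSpace H]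
    {φ : G → H →L[ℂ] H} (hφ : IsAlphaCP α φ) (h : G) : φ (α h) = φ h := by
  simpa using (hφ.1 h 1).2

namespace ContinuousLinearMap

variable {𝕜 E F : Type*} [RCLike 𝕜] [NormedAddCommGroup E] [InnerProductSpace 𝕜 E]
  [CompleteSpace E] [NormedAddCommGroup F] [InnerProductSpace 𝕜 F] [CompleteSpace F]

lemma norm_apply_eq_of_comp_self_eq_adjoint_comp_self {S : E →L[𝕜] F} {R : E →L[𝕜] E}
    (hR : IsSelfAdjoint R) (hRR : R ∘L R = adjoint S ∘L S) (x : E) : ‖S x‖ = ‖R x‖ := by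
  have h : ‖S x‖ ^ 2 = ‖R x‖ ^ 2 := by
    rw [apply_norm_sq_eq_inner_adjoint_left, apply_norm_sq_eq_inner_adjoint_left, ← hRR,
      hR.adjoint_eq]
  exact (sq_eq_sq₀ (norm_nonneg _) (norm_nonneg _)).mp h

lemma surjective_adjoint_of_bijective {S : E →L[𝕜] F} (hS : Function.Bijective S) :
    Function.Surjective (adjoint S) := by
  let e := ContinuousLinearEquiv.ofBijective S (LinearMap.ker_eq_bot.mpr hS.1)
    (LinearMap.range_eq_top.mpr hS.2)
  have h : adjoint S ∘L adjoint (e.symm : F →L[𝕜] E) = ContinuousLinearMap.id 𝕜 E := by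
    rw [← adjoint_comp]
    convert adjoint_id (𝕜 := 𝕜) (E := E)
    ext x
    exact e.symm_apply_apply x
  exact fun y => ⟨adjoint (e.symm : F →L[𝕜] E) y, congrArg (· y) h⟩

theorem exists_linearIsometryEquiv_of_bijective_of_comp_self_eq {S : E →L[𝕜] F}
    (hS : Function.Bijective S) {R : E →L[𝕜] E} (hR : IsSelfAdjoint R)
    (hRR : R ∘L R = adjoint S ∘L S) : ∃ U : E ≃ₗᵢ[𝕜] F, ∀ x, S x = U (R x) := by
  have hnorm := norm_apply_eq_of_comp_self_eq_adjoint_comp_self hR hRR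
  have hR_inj : Function.Injective R := (injective_iff_map_eq_zero R).mpr fun x hx =>
    (injective_iff_map_eq_zero S).mp hS.1 x (norm_eq_zero.mp (by rw [hnorm, hx, norm_zero]))
  have hR_surj : Function.Surjective R := fun y => by
    obtain ⟨z, rfl⟩ := surjective_adjoint_of_bijective hS y
    obtain ⟨w, rfl⟩ := hS.2 z
    exact ⟨R w, congrArg (· w) hRR⟩
  let eR := LinearEquiv.ofBijective (R : E →ₗ[𝕜] E) ⟨hR_inj, hR_surj⟩
  let eS := LinearEquiv.ofBijective (S : E →ₗ[𝕜] F) hS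
  refine ⟨⟨eR.symm.trans eS, fun x => ?_⟩, fun x => ?_⟩
  · show ‖S (eR.symm x)‖ = ‖x‖
    rw [hnorm]
    exact congrArg norm (eR.apply_symm_apply x)
  · show S x = S (eR.symm (R x))
    exact congrArg S (eR.symm_apply_apply x).symm

end ContinuousLinearMap

namespace KreinDilation

variable {G : Type*} [Group G] {α : G → G}
  {H : Type*} [NormedAddCommGroup H] [InnerProductSpace ℂ H] [CompleteSpace H]
  {φ ψ : G → H →L[ℂ] H}

section

variable (D : KreinDilation G α H φ)

lemma rep_apply_rep (g g' : G) (x : D.K) : D.rep g (D.rep g' x) = D.rep (g * g') x := by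
  rw [D.rep_mul]; rfl

@[simp]
lemma J_apply_J (x : D.K) : D.J (D.J x) = x := by
  simpa using congrArg (· x) D.J_inv

lemma J_rep_V_apply (g : G) (ξ : H) : D.J (D.rep g (D.V ξ)) = D.rep (α g) (D.V ξ) := by
  simpa using congrArg (· ξ) (D.commJ g)

lemma adjoint_rep (g : G) : adjoint (D.rep g) = D.J ∘L D.rep g⁻¹ ∘L D.J := by
  ext x
  simp [D.rep_inv]

lemma adjoint_V_rep_V_apply (g : G) (ξ : H) : adjoint D.V (D.rep g (D.V ξ)) = φ g ξ := by
  simp [D.eq g]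

lemma inner_rep_V_rep_V (hφα : ∀ h, φ (α h) = φ h) (g g' : G) (ξ ξ' : H) :
    inner ℂ (D.rep g (D.V ξ)) (D.rep g' (D.V ξ')) = inner ℂ (φ (g'⁻¹ * α g) ξ) ξ' := by
  rw [← adjoint_inner_left, adjoint_rep, comp_apply, comp_apply, J_rep_V_apply, rep_apply_rep,
    J_rep_V_apply, ← adjoint_inner_left, adjoint_V_rep_V_apply, hφα]

lemma inner_self_sum_rep_V (hφα : ∀ h, φ (α h) = φ h) {n : ℕ} (g : Fin n → G) (ξ : Fin n → H) :
    inner ℂ (∑ i, D.rep (g i) (D.V (ξ i))) (∑ i, D.rep (g i) (D.V (ξ i))) =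
      ∑ i, ∑ j, inner ℂ (φ ((g i)⁻¹ * α (g j)) (ξ j)) (ξ i) := by
  rw [inner_sum]
  refine Finset.sum_congr rfl fun i _ => ?_
  rw [sum_inner]
  exact Finset.sum_congr rfl fun j _ => D.inner_rep_V_rep_V hφα (g j) (g i) (ξ j) (ξ i)

def cyclicSpan : Submodule ℂ D.K := Submodule.span ℂ {x | ∃ g ξ, x = D.rep g (D.V ξ)}

lemma dense_cyclicSpan : Dense (D.cyclicSpan : Set D.K) :=
  Submodule.dense_iff_topologicalClosure_eq_top.mpr D.minimal

lemma ext_rep_V {M : Type*} [NormedAddCommGroup M] [InnerProductSpace ℂ M] {A B : D.K →L[ℂ] M}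
    (h : ∀ g ξ, A (D.rep g (D.V ξ)) = B (D.rep g (D.V ξ))) : A = B :=
  ContinuousLinearMap.ext_on D.dense_cyclicSpan fun _ ⟨g, ξ, hx⟩ => hx ▸ h g ξ

lemma exists_sum_of_mem_cyclicSpan {x : D.K} (hx : x ∈ D.cyclicSpan) :
    ∃ (n : ℕ) (g : Fin n → G) (ξ : Fin n → H), x = ∑ i, D.rep (g i) (D.V (ξ i)) := by
  induction hx using Submodule.span_induction with
  | mem x hx =>
    obtain ⟨g, ξ, rfl⟩ := hx
    exact ⟨1, fun _ => g, fun _ => ξ, by simp⟩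
  | zero => exact ⟨0, Fin.elim0, Fin.elim0, by simp⟩
  | add x y _ _ hx hy =>
    obtain ⟨n, g, ξ, rfl⟩ := hx
    obtain ⟨m, g', ξ', rfl⟩ := hy
    refine ⟨n + m, Fin.append g g', Fin.append ξ ξ', ?_⟩
    simp [Fin.sum_univ_add]
  | smul c x _ hx =>
    obtain ⟨n, g, ξ, rfl⟩ := hx
    exact ⟨n, g, fun i => c • ξ i, by simp [Finset.smul_sum]⟩

lemma isClosed_property_sum {p : D.K → Prop} (hp : IsClosed {x | p x})
    (h : ∀ (n : ℕ) (g : Fin n → G) (ξ : Fin n → H), p (∑ i, D.rep (g i) (D.V (ξ i))))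
    (x : D.K) : p x := by
  refine hp.closure_subset_iff.mpr (fun y hy => ?_) (D.dense_cyclicSpan x)
  obtain ⟨n, g, ξ, rfl⟩ := D.exists_sum_of_mem_cyclicSpan hy
  exact h n g ξ

end

section Intertwiner

variable {D₁ : KreinDilation G α H φ} {D₂ : KreinDilation G α H ψ} {T : D₁.K →L[ℂ] D₂.K}

lemma comp_rep_of_apply_rep_V
    (hT : ∀ g ξ, T (D₁.rep g (D₁.V ξ)) = D₂.rep g (D₂.V ξ)) (g : G) :
    T ∘L D₁.rep g = D₂.rep g ∘L T :=
  D₁.ext_rep_V fun g' ξ => by simp only [comp_apply, rep_apply_rep, hT]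

lemma comp_J_of_apply_rep_V (hT : ∀ g ξ, T (D₁.rep g (D₁.V ξ)) = D₂.rep g (D₂.V ξ)) :
    T ∘L D₁.J = D₂.J ∘L T :=
  D₁.ext_rep_V fun g ξ => by simp only [comp_apply, J_rep_V_apply, hT]

lemma comp_V_of_apply_rep_V (hT : ∀ g ξ, T (D₁.rep g (D₁.V ξ)) = D₂.rep g (D₂.V ξ)) :
    T ∘L D₁.V = D₂.V := by
  ext ξ
  simpa [D₁.rep_one, D₂.rep_one] using hT 1 ξ

lemma adjoint_comp_J_of_comp_J (hJ : T ∘L D₁.J = D₂.J ∘L T) :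
    adjoint T ∘L D₂.J = D₁.J ∘L adjoint T := by
  simpa [adjoint_comp, J_sa] using (congrArg adjoint hJ).symm

lemma adjoint_comp_rep_of_comp_rep (hrep : ∀ g, T ∘L D₁.rep g = D₂.rep g ∘L T)
    (hJ : T ∘L D₁.J = D₂.J ∘L T) (g : G) : adjoint T ∘L D₂.rep g = D₁.rep g ∘L adjoint T := by
  have h : T ∘L adjoint (D₁.rep g) = adjoint (D₂.rep g) ∘L T := by
    ext x
    simp only [adjoint_rep, comp_apply]
    rw [← comp_apply T D₁.J, hJ, comp_apply, ← comp_apply T, hrep, comp_apply, ← comp_apply T, hJ,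
      comp_apply]
  simpa [adjoint_comp] using (congrArg adjoint h).symm

lemma norm_sq_le_of_isAlphaCP_sub (hα : IsInvolution G α) (hφα : ∀ h, φ (α h) = φ h)
    (hψα : ∀ h, ψ (α h) = ψ h) (hT : ∀ g ξ, T (D₁.rep g (D₁.V ξ)) = D₂.rep g (D₂.V ξ)) {l : ℝ}
    (hl : IsAlphaCP α (fun g => (l : ℂ) • ψ g - φ g)) (x : D₁.K) : ‖x‖ ^ 2 ≤ l * ‖T x‖ ^ 2 := by
  refine D₁.isClosed_property_sum (p := fun x => ‖x‖ ^ 2 ≤ l * ‖T x‖ ^ 2)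
    (isClosed_le (continuous_norm.pow 2)
      (continuous_const.mul ((continuous_norm.comp T.continuous).pow 2))) (fun n g ξ => ?_) x
  have hTx : T (∑ i, D₁.rep (g i) (D₁.V (ξ i))) = ∑ i, D₂.rep (g i) (D₂.V (ξ i)) := by
    simp only [map_sum, hT]
  have hpos := hl.2.1 n (α ∘ g) ξ
  simp only [Function.comp_apply, hα.1, sub_apply, smul_apply, inner_sub_left, inner_smul_left,
    Complex.conj_ofReal, Finset.sum_sub_distrib, ← Finset.mul_sum, sub_nonneg] at hpos
  rw [← D₁.inner_self_sum_rep_V hφα, ← D₂.inner_self_sum_rep_V hψα, ← hTx,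
    inner_self_eq_norm_sq_to_K, inner_self_eq_norm_sq_to_K] at hpos
  refine Complex.real_le_real.mp ?_
  push_cast
  exact hpos

lemma bijective_of_isAlphaCP_sub (hα : IsInvolution G α) (hφα : ∀ h, φ (α h) = φ h)
    (hψα : ∀ h, ψ (α h) = ψ h) (hT : ∀ g ξ, T (D₁.rep g (D₁.V ξ)) = D₂.rep g (D₂.V ξ)) {l : ℝ}
    (hl₀ : 0 ≤ l) (hl : IsAlphaCP α (fun g => (l : ℂ) • ψ g - φ g)) : Function.Bijective T := by
  refine T.bijective_iff_dense_range_and_antilipschitz.mpr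
    ⟨?_, Real.toNNReal √l, T.antilipschitz_of_bound fun x => ?_⟩
  · rw [eq_top_iff, ← D₂.minimal]
    refine Submodule.topologicalClosure_mono (Submodule.span_le.mpr ?_)
    rintro _ ⟨g, ξ, rfl⟩
    exact ⟨D₁.rep g (D₁.V ξ), hT g ξ⟩
  · rw [Real.coe_toNNReal _ (Real.sqrt_nonneg l)]
    refine (pow_le_pow_iff_left₀ (norm_nonneg _) (by positivity) two_ne_zero).mp ?_
    rw [mul_pow, Real.sq_sqrt hl₀]
    exact norm_sq_le_of_isAlphaCP_sub hα hφα hψα hT hl x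

end Intertwiner

end KreinDilation

open KreinDilation

open ContinuousLinearMap in
theorem intertwiner_polar_factorization_general {G : Type*} [Group G] (α : G → G)
    {H : Type*} [NormedAddCommGroup H] [InnerProductSpace ℂ H] [CompleteSpace H]
    (φ ψ : G → H →L[ℂ] H) (hα : IsInvolution G α)
    (hφ : IsAlphaCP α φ) (hψ : IsAlphaCP α ψ)
    (h₂ : ∃ l > (0 : ℝ), IsAlphaCP α (fun g => (l : ℂ) • ψ g - φ g))
    (Dφ : KreinDilation G α H φ) (Dψ : KreinDilation G α H ψ)
    (S : Dφ.K →L[ℂ] Dψ.K)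
    (hS : ∀ (g : G) (ξ : H), S (Dφ.rep g (Dφ.V ξ)) = Dψ.rep g (Dψ.V ξ)) :
    ((adjoint S ∘L S).IsPositive ∧
      (∀ g : G, (adjoint S ∘L S) ∘L Dφ.rep g = Dφ.rep g ∘L (adjoint S ∘L S)) ∧
      (adjoint S ∘L S) ∘L Dφ.J = Dφ.J ∘L (adjoint S ∘L S) ∧
      (∀ g : G, ψ g = adjoint Dφ.V ∘L (adjoint S ∘L S) ∘L Dφ.rep g ∘L Dφ.V)) ∧
    (∀ R : Dφ.K →L[ℂ] Dφ.K, R.IsPositive → R ∘L R = adjoint S ∘L S →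
      ∃ U : Dφ.K ≃ₗᵢ[ℂ] Dψ.K, ∀ x : Dφ.K, S x = U (R x)) := by
  obtain ⟨l, hl, hcp⟩ := h₂
  have hrep := comp_rep_of_apply_rep_V hS
  have hJ := comp_J_of_apply_rep_V hS
  have hrep' := adjoint_comp_rep_of_comp_rep hrep hJ
  have hJ' := adjoint_comp_J_of_comp_J hJ
  have hbij := bijective_of_isAlphaCP_sub hα hφ.apply_alpha hψ.apply_alpha hS hl.le hcp
  refine ⟨⟨isPositive_adjoint_comp_self S, fun g => ?_, ?_, fun g => ?_⟩,
    fun R hR hRR =>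
      exists_linearIsometryEquiv_of_bijective_of_comp_self_eq hbij hR.isSelfAdjoint hRR⟩
  · rw [comp_assoc, hrep, ← comp_assoc, hrep', comp_assoc]
  · rw [comp_assoc, hJ, ← comp_assoc, hJ', comp_assoc]
  · rw [Dψ.eq g, ← comp_V_of_apply_rep_V hS, adjoint_comp]
    simp only [comp_assoc]
    rw [← comp_assoc S, hrep, comp_assoc]

open ContinuousLinearMap in
theorem intertwiner_polar_factorization {G : Type*} [Group G] (α : G → G)
    {H : Type*} [NormedAddCommGroup H] [InnerProductSpace ℂ H] [CompleteSpace H]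
    (φ ψ : G → H →L[ℂ] H) (hα : IsInvolution G α)
    (hφ : IsAlphaCP α φ) (hψ : IsAlphaCP α ψ)
    (h₁ : ∃ l > (0 : ℝ), IsAlphaCP α (fun g => (l : ℂ) • φ g - ψ g))
    (h₂ : ∃ l > (0 : ℝ), IsAlphaCP α (fun g => (l : ℂ) • ψ g - φ g))
    (Dφ : KreinDilation G α H φ) (Dψ : KreinDilation G α H ψ)
    (S : Dφ.K →L[ℂ] Dψ.K)
    (hS : ∀ (g : G) (ξ : H), S (Dφ.rep g (Dφ.V ξ)) = Dψ.rep g (Dψ.V ξ)) :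
    ((adjoint S ∘L S).IsPositive ∧
      (∀ g : G, (adjoint S ∘L S) ∘L Dφ.rep g = Dφ.rep g ∘L (adjoint S ∘L S)) ∧
      (adjoint S ∘L S) ∘L Dφ.J = Dφ.J ∘L (adjoint S ∘L S) ∧
      (∀ g : G, ψ g = adjoint Dφ.V ∘L (adjoint S ∘L S) ∘L Dφ.rep g ∘L Dφ.V)) ∧
    (∀ R : Dφ.K →L[ℂ] Dφ.K, R.IsPositive → R ∘L R = adjoint S ∘L S →
      ∃ U : Dφ.K ≃ₗᵢ[ℂ] Dψ.K, ∀ x : Dφ.K, S x = U (R x)) :=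
  intertwiner_polar_factorization_general α φ ψ hα hφ hψ h₂ Dφ Dψ S hS
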